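/- Let G be an abelian group and let g : ω → G be a sequence such that the set {g(n) : n ∈ ω} is infinite and there is an integer k > 1 with k·(g(n) − g(n₀)) = 0 for all n and some fixed n₀. Then there exist c ∈ G, an infinite subset J ⊆ ω, and a divisor r > 1 of k such that {g(n) + c : n ∈ J} is an r-round subset of G and every element g(n) + c for n ∈ J has order r. -/

import Mathlib

/-- `S` is an `r`-round subset of the abelian group `G`. -/
def IsRound {G : Type*} [AddCommGroup G] (r : ℕ) (S : Set G) : Prop :=
  1 < r ∧ S.Countable ∧ S.Infinite ∧ (∀ x ∈ S, r • x = 0) ∧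
    ∀ e : ℕ, e ∣ r → e ≠ r → ∀ y : G, {x ∈ S | e • x = y}.Finite

/-!
Among the divisors `d` of `k` for which some fibre `{x ∈ S | d • x = y}` of `x ↦ d • x` on
`S = {g n - g n₀}` is infinite, take the least one. Every proper divisor of `d` is then
finite-to-one on `S`, so an infinite fibre, translated to pass through `0`, is `d`-round.
Finally, the elements of order less than `d` in a `d`-round set lie in the finitely many
finite fibres over `0` of the proper divisors of `d`; discarding them keeps the set round.
-/

section Round

variable {G : Type*} [AddCommGroup G]

theorem IsRound.mono {r : ℕ} {S T : Set G} (hS : IsRound r S) (hTS : T ⊆ S)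
    (hT : T.Infinite) : IsRound r T := by
  obtain ⟨hr, hSc, -, hrS, hfib⟩ := hS
  exact ⟨hr, hSc.mono hTS, hT, fun x hx => hrS x (hTS hx),
    fun e he hne y => (hfib e he hne y).subset fun x hx => ⟨hTS hx.1, hx.2⟩⟩

theorem IsRound.setOf_addOrderOf_eq {r : ℕ} {S : Set G} (hS : IsRound r S) :
    IsRound r {x ∈ S | addOrderOf x = r} := by
  obtain ⟨hr, -, hSinf, hrS, hfib⟩ := id hS
  have hdivs : {e : ℕ | e ∣ r ∧ e ≠ r}.Finite :=
    (Nat.divisors r).finite_toSet.subset fun e he => Nat.mem_divisors.2 ⟨he.1, by omega⟩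
  have hsmall : {x ∈ S | addOrderOf x ≠ r}.Finite := by
    refine (hdivs.biUnion fun e he => hfib e he.1 he.2 0).subset ?_
    rintro x ⟨hx, hne⟩
    exact Set.mem_biUnion (⟨addOrderOf_dvd_of_nsmul_eq_zero (hrS x hx), hne⟩ :
      addOrderOf x ∈ {e : ℕ | e ∣ r ∧ e ≠ r}) ⟨hx, addOrderOf_nsmul_eq_zero x⟩
  refine hS.mono (fun x hx => hx.1) ((hSinf.sdiff hsmall).mono ?_)
  exact fun x hx => ⟨hx.1, not_not.1 fun hne => hx.2 ⟨hx.1, hne⟩⟩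

theorem exists_isRound_translate_subset {S : Set G} (hSinf : S.Infinite) (hSc : S.Countable)
    {k : ℕ} (hk : k ≠ 0) (hkS : ∀ x ∈ S, k • x = 0) :
    ∃ d, d ∣ k ∧ ∃ (R : Set G) (z : G), IsRound d R ∧ ∀ x ∈ R, x + z ∈ S := by
  classical
  have hex : ∃ d, d ∣ k ∧ ∃ y : G, {x ∈ S | d • x = y}.Infinite :=
    ⟨k, dvd_rfl, 0, hSinf.mono fun x hx => ⟨hx, hkS x hx⟩⟩
  obtain ⟨hdk, y, hy⟩ := Nat.find_spec hex
  set d := Nat.find hex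
  have hd0 : d ≠ 0 := by rintro hd; exact hk (zero_dvd_iff.1 (hd ▸ hdk))
  have hmin : ∀ e, e ∣ d → e ≠ d → ∀ w : G, {x ∈ S | e • x = w}.Finite :=
    fun e hed hne w => Set.not_infinite.1 fun hw => Nat.find_min hex
      (lt_of_le_of_ne (Nat.le_of_dvd (Nat.pos_of_ne_zero hd0) hed) hne) ⟨hed.trans hdk, w, hw⟩
  have hd1 : d ≠ 1 := fun hd => hy <| (Set.finite_singleton y).subset fun x hx => by
    simpa [hd] using hx.2
  obtain ⟨z, -, hz⟩ := hy.nonempty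
  refine ⟨d, hdk, (· + z) ⁻¹' {x ∈ S | d • x = y}, z, ⟨by omega, ?_, ?_, ?_, ?_⟩,
    fun x hx => hx.1⟩
  · exact (hSc.mono (Set.sep_subset _ _)).preimage (add_left_injective z)
  · exact hy.preimage fun x _ => ⟨x - z, sub_add_cancel x z⟩
  · intro x hx
    simpa [smul_add, hz] using hx.2
  · intro e hed hne w
    refine ((hmin e hed hne (w + e • z)).preimage (add_left_injective z).injOn).subset ?_
    rintro x ⟨hx, rfl⟩
    exact ⟨hx.1, smul_add e x z⟩

end Round

theorem stmt13 {G : Type*} [AddCommGroup G] (g : ℕ → G)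
    (hinf : (Set.range g).Infinite) (k : ℕ) (hk : 1 < k) (n₀ : ℕ)
    (htor : ∀ n, k • (g n - g n₀) = 0) :
    ∃ (c : G) (J : Set ℕ) (r : ℕ), J.Infinite ∧ 1 < r ∧ r ∣ k ∧
      IsRound r {x : G | ∃ n ∈ J, x = g n + c} ∧
      ∀ n ∈ J, addOrderOf (g n + c) = r := by
  have hS : (Set.range fun n => g n - g n₀).Infinite := by
    rw [← Function.comp_def (· - g n₀) g, Set.range_comp]
    exact hinf.image sub_left_injective.injOn
  obtain ⟨r, hrk, R₀, z, hR₀, hR₀S⟩ := exists_isRound_translate_subset hS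
    (Set.countable_range _) (k := k) (by omega) (by rintro _ ⟨n, rfl⟩; exact htor n)
  set R := {x ∈ R₀ | addOrderOf x = r}
  set c := -(g n₀ + z) with hc
  set J := {n | g n + c ∈ R}
  have hJR : {x | ∃ n ∈ J, x = g n + c} = R := by
    refine Set.Subset.antisymm (by rintro _ ⟨n, hn, rfl⟩; exact hn) fun x hx => ?_
    obtain ⟨n, hn⟩ := hR₀S x hx.1
    have hx' : x = g n + c := by
      rw [eq_sub_of_add_eq hn.symm, hc]
      dsimp only
      abel
    exact ⟨n, show g n + c ∈ R from hx' ▸ hx, hx'⟩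
  have hR : IsRound r R := hR₀.setOf_addOrderOf_eq
  refine ⟨c, J, r, ?_, hR.1, hrk, hJR ▸ hR, fun n hn => hn.2⟩
  refine Set.Infinite.of_image (fun n => g n + c) (hR.2.2.1.mono fun x hx => ?_)
  rw [← hJR] at hx
  obtain ⟨n, hn, rfl⟩ := hx
  exact ⟨n, hn, rfl⟩
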